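/- arXiv:1904.05999 — 4 statements merged into one kernel-verified Lean document; each statement's English description precedes it below -/
import Mathlib

section
/- Let α > 0, σ ≥ 1, r > 0 and μ > 0. Then μ^σ / (α + μ^(σr))^(1/r) ≤ μ / α^(1/(σr)). -/
/-!
Clearing denominators and raising to the power `r`, the inequality becomes
`α ^ (1 / σ) * μ ^ (r * (σ - 1)) ≤ α + μ ^ (σ * r)`. Since `μ ^ (r * (σ - 1))` is
`(μ ^ (σ * r)) ^ ((σ - 1) / σ)`, this is Young's inequality for the conjugate weights
`1 / σ` and `(σ - 1) / σ`.
-/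

open Real

theorem rpow_mul_rpow_le_add {a b p q : ℝ} (ha : 0 ≤ a) (hb : 0 ≤ b) (hp : 0 ≤ p) (hq : 0 ≤ q)
    (hpq : p + q = 1) : a ^ p * b ^ q ≤ a + b :=
  calc a ^ p * b ^ q ≤ p * a + q * b := geom_mean_le_arith_mean2_weighted hp hq ha hb hpq
    _ ≤ a + b := by nlinarith

theorem rpow_one_div_mul_rpow_le_add_rpow {α σ r μ : ℝ} (hα : 0 ≤ α) (hσ : 1 ≤ σ) (hμ : 0 ≤ μ) :
    α ^ (1 / σ) * μ ^ (r * (σ - 1)) ≤ α + μ ^ (σ * r) := by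
  have hσ0 : σ ≠ 0 := by positivity
  have hpow : μ ^ (r * (σ - 1)) = (μ ^ (σ * r)) ^ ((σ - 1) / σ) := by
    rw [← rpow_mul hμ]
    congr 1
    field_simp
  rw [hpow]
  exact rpow_mul_rpow_le_add hα (by positivity) (by positivity)
    (div_nonneg (by linarith) (by positivity)) (by field_simp; ring)

theorem stmt_1 (α σ r μ : ℝ) (hα : 0 < α) (hσ : 1 ≤ σ) (hr : 0 < r) (hμ : 0 < μ) :
    μ ^ σ / (α + μ ^ (σ * r)) ^ (1 / r) ≤ μ / α ^ (1 / (σ * r)) := by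
  have hσ0 : 0 < σ := by linarith
  have hyoung := rpow_one_div_mul_rpow_le_add_rpow (r := r) hα.le hσ hμ.le
  have hroot : μ ^ (σ - 1) * α ^ (1 / (σ * r)) ≤ (α + μ ^ (σ * r)) ^ (1 / r) :=
    calc μ ^ (σ - 1) * α ^ (1 / (σ * r)) = (α ^ (1 / σ) * μ ^ (r * (σ - 1))) ^ (1 / r) := by
          rw [mul_rpow (by positivity) (by positivity), ← rpow_mul hα.le, ← rpow_mul hμ.le,
            mul_comm (μ ^ _)]
          congr 2 <;> field_simp
      _ ≤ (α + μ ^ (σ * r)) ^ (1 / r) := rpow_le_rpow (by positivity) hyoung (by positivity)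
  rw [div_le_div_iff₀ (by positivity) (by positivity)]
  calc μ ^ σ * α ^ (1 / (σ * r)) = μ * (μ ^ (σ - 1) * α ^ (1 / (σ * r))) := by
        rw [← mul_assoc, ← rpow_one_add' hμ.le (by linarith)]
        ring_nf
    _ ≤ μ * (α + μ ^ (σ * r)) ^ (1 / r) := mul_le_mul_of_nonneg_left hroot hμ.le
end

section
/- Let q(α,μ) be the modified filter (equal to 1 when μ^(σr) ≥ α, and μ^σ/(α+μ^(σr))^(1/r) when μ^(σr) < α). Then for all α > 0, μ > 0 and all ν > 0, |q(α,μ) − 1| · μ^(2ν) < α^(2ν/(σr)) whenever μ^(σr) < α, and equals 0 when μ^(σr) ≥ α; in particular |q(α,μ) − 1|·μ^(2ν) ≤ α^(2ν/(σr)) always. -/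
theorem stmt_5 (σ r ν : ℝ) (hσ : 1 ≤ σ) (hr : 0 < r) (hν : 0 < ν)
    (q : ℝ → ℝ → ℝ)
    (hq : ∀ α m, q α m = if α ≤ m ^ (σ * r) then 1 else m ^ σ / (α + m ^ (σ * r)) ^ (1 / r)) :
    ∀ α μ : ℝ, 0 < α → 0 < μ →
      (μ ^ (σ * r) < α → |q α μ - 1| * μ ^ (2 * ν) < α ^ (2 * ν / (σ * r))) ∧
      (α ≤ μ ^ (σ * r) → |q α μ - 1| * μ ^ (2 * ν) = 0) ∧
      |q α μ - 1| * μ ^ (2 * ν) ≤ α ^ (2 * ν / (σ * r)) := by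
  intro α μ hα hμ
  have hσ0 : (0:ℝ) < σ := lt_of_lt_of_le one_pos hσ
  have hσr : 0 < σ * r := mul_pos hσ0 hr
  have hexp : 0 < 2 * ν / (σ * r) := div_pos (by linarith) hσr
  have h2 : α ≤ μ ^ (σ * r) → |q α μ - 1| * μ ^ (2 * ν) = 0 := by
    intro h
    rw [hq, if_pos h]
    simp
  have h1 : μ ^ (σ * r) < α → |q α μ - 1| * μ ^ (2 * ν) < α ^ (2 * ν / (σ * r)) := by
    intro h
    have hne : ¬ α ≤ μ ^ (σ * r) := not_le.mpr h
    rw [hq, if_neg hne]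
    have hdpos : (0:ℝ) < α + μ ^ (σ * r) := by positivity
    have hd : 0 < (α + μ ^ (σ * r)) ^ (1 / r) := Real.rpow_pos_of_pos hdpos _
    have hμσr : (μ ^ (σ * r)) ^ (1 / r) = μ ^ σ := by
      rw [← Real.rpow_mul hμ.le]
      congr 1
      field_simp
    have hqle : μ ^ σ / (α + μ ^ (σ * r)) ^ (1 / r) ≤ 1 := by
      rw [div_le_one hd, ← hμσr]
      exact Real.rpow_le_rpow (by positivity) (by linarith) (by positivity)
    have hq0 : 0 ≤ μ ^ σ / (α + μ ^ (σ * r)) ^ (1 / r) := by positivity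
    have habs : |μ ^ σ / (α + μ ^ (σ * r)) ^ (1 / r) - 1| ≤ 1 :=
      abs_le.mpr ⟨by linarith, by linarith⟩
    have hrpow : μ ^ (2 * ν) < α ^ (2 * ν / (σ * r)) := by
      have := Real.rpow_lt_rpow (Real.rpow_pos_of_pos hμ (σ * r)).le h hexp
      rwa [← Real.rpow_mul hμ.le, mul_div_cancel₀ _ (ne_of_gt hσr)] at this
    calc |μ ^ σ / (α + μ ^ (σ * r)) ^ (1 / r) - 1| * μ ^ (2 * ν)
        ≤ 1 * μ ^ (2 * ν) :=
          mul_le_mul_of_nonneg_right habs (Real.rpow_pos_of_pos hμ _).le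
      _ = μ ^ (2 * ν) := one_mul _
      _ < α ^ (2 * ν / (σ * r)) := hrpow
  refine ⟨h1, h2, ?_⟩
  rcases le_or_gt α (μ ^ (σ * r)) with h | h
  · rw [h2 h]
    exact (Real.rpow_pos_of_pos hα _).le
  · exact (h1 h).le
end

section
/- Let K : X → Y be a compact operator between Hilbert spaces with singular system (μᵢ, xᵢ, yᵢ), and let q : (0,∞) × (0,‖K‖] → ℝ satisfy |q(α,μ)| ≤ 1 and |q(α,μ)| ≤ c(α)·μ for all μ in (0,‖K‖]. Then the operator R_α : Y → X defined by R_α y = Σᵢ (q(α,μᵢ)/μᵢ)·⟨y,yᵢ⟩·xᵢ is bounded with ‖R_α‖ ≤ c(α). -/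
open scoped InnerProductSpace

theorem stmt_9 {X Y : Type*} [NormedAddCommGroup X] [InnerProductSpace ℝ X] [CompleteSpace X]
    [NormedAddCommGroup Y] [InnerProductSpace ℝ Y] [CompleteSpace Y]
    (K : X →L[ℝ] Y) (hK : IsCompactOperator K)
    (μ : ℕ → ℝ) (xv : ℕ → X) (yv : ℕ → Y)
    (hxv : Orthonormal ℝ xv) (hyv : Orthonormal ℝ yv)
    (hμ : ∀ i, 0 < μ i) (hμK : ∀ i, μ i ≤ ‖K‖)
    (hKx : ∀ i, K (xv i) = μ i • yv i)
    (hKy : ∀ i, ContinuousLinearMap.adjoint K (yv i) = μ i • xv i)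
    (q : ℝ → ℝ → ℝ) (c : ℝ → ℝ) (α : ℝ) (hα : 0 < α) (hc : 0 < c α)
    (hq1 : ∀ m : ℝ, 0 < m → m ≤ ‖K‖ → |q α m| ≤ 1)
    (hq2 : ∀ m : ℝ, 0 < m → m ≤ ‖K‖ → |q α m| ≤ c α * m)
    (Rα : Y → X)
    (hR : ∀ w : Y, Rα w = ∑' i : ℕ, (q α (μ i) / μ i) • (⟪w, yv i⟫_ℝ) • xv i) :
    ∀ w : Y, ‖Rα w‖ ≤ c α * ‖w‖ := by
  intro w
  set a : ℕ → ℝ := fun i => (q α (μ i) / μ i) * ⟪w, yv i⟫_ℝ with ha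
  -- coefficient bound
  have hqdiv : ∀ i, |q α (μ i) / μ i| ≤ c α := by
    intro i
    rw [abs_div, abs_of_pos (hμ i), div_le_iff₀ (hμ i)]
    exact hq2 (μ i) (hμ i) (hμK i)
  have habs : ∀ i, ‖a i‖ ^ 2 ≤ c α ^ 2 * ‖⟪w, yv i⟫_ℝ‖ ^ 2 := by
    intro i
    have h1 : ‖a i‖ ≤ c α * ‖⟪w, yv i⟫_ℝ‖ := by
      rw [ha]
      simp only [Real.norm_eq_abs, abs_mul]
      exact mul_le_mul_of_nonneg_right (hqdiv i) (abs_nonneg _)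
    calc ‖a i‖ ^ 2 ≤ (c α * ‖⟪w, yv i⟫_ℝ‖) ^ 2 := by
          exact pow_le_pow_left₀ (norm_nonneg _) h1 2
      _ = c α ^ 2 * ‖⟪w, yv i⟫_ℝ‖ ^ 2 := by ring
  have hbessel : Summable fun i => ‖⟪w, yv i⟫_ℝ‖ ^ 2 := by
    simpa [real_inner_comm] using hyv.inner_products_summable w
  have hsum2 : Summable fun i => ‖a i‖ ^ 2 :=
    Summable.of_nonneg_of_le (fun i => by positivity) habs (hbessel.mul_left _)
  -- the tsum over ℕ of bound: ∑ ‖a i‖² ≤ cα² ‖w‖²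
  have htsum2 : ∑' i, ‖a i‖ ^ 2 ≤ c α ^ 2 * ‖w‖ ^ 2 := by
    calc ∑' i, ‖a i‖ ^ 2 ≤ ∑' i, c α ^ 2 * ‖⟪w, yv i⟫_ℝ‖ ^ 2 :=
          Summable.tsum_le_tsum habs hsum2 (hbessel.mul_left _)
      _ = c α ^ 2 * ∑' i, ‖⟪w, yv i⟫_ℝ‖ ^ 2 := tsum_mul_left
      _ ≤ c α ^ 2 * ‖w‖ ^ 2 := by
          have hb : (∑' i, ‖⟪w, yv i⟫_ℝ‖ ^ 2) ≤ ‖w‖ ^ 2 := by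
            simpa [real_inner_comm] using hyv.tsum_inner_products_le w
          exact mul_le_mul_of_nonneg_left hb (by positivity)
  -- summability of the series
  have hofam := hxv.orthogonalFamily
  have hsummable : Summable fun i => a i • xv i := by
    have := (hofam.summable_iff_norm_sq_summable a).2 (by simpa using hsum2)
    simpa [LinearIsometry.toSpanSingleton_apply] using this
  have hfun : ∀ i, (q α (μ i) / μ i) • (⟪w, yv i⟫_ℝ) • xv i = a i • xv i := fun i => by
    rw [ha]; simp [smul_smul]
  have hhs : HasSum (fun i => a i • xv i) (Rα w) := by
    rw [hR w, tsum_congr hfun]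
    exact hsummable.hasSum
  -- bound partial sums, then pass to the limit
  have hbound : ∀ s : Finset ℕ, ‖∑ i ∈ s, a i • xv i‖ ≤ c α * ‖w‖ := by
    intro s
    have hns : ‖∑ i ∈ s, a i • xv i‖ ^ 2 = ∑ i ∈ s, ‖a i‖ ^ 2 := by
      have := hofam.norm_sum a s
      simpa [LinearIsometry.toSpanSingleton_apply] using this
    have hle : ∑ i ∈ s, ‖a i‖ ^ 2 ≤ c α ^ 2 * ‖w‖ ^ 2 :=
      le_trans (Summable.sum_le_tsum s (fun i _ => by positivity) hsum2) htsum2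
    have h2 : ‖∑ i ∈ s, a i • xv i‖ ^ 2 ≤ (c α * ‖w‖) ^ 2 := by
      rw [hns]; calc ∑ i ∈ s, ‖a i‖ ^ 2 ≤ c α ^ 2 * ‖w‖ ^ 2 := hle
        _ = (c α * ‖w‖) ^ 2 := by ring
    nlinarith [norm_nonneg (∑ i ∈ s, a i • xv i), mul_nonneg hc.le (norm_nonneg w)]
  have htend : Filter.Tendsto (fun s : Finset ℕ => ‖∑ i ∈ s, a i • xv i‖) Filter.atTop
      (nhds ‖Rα w‖) := ((continuous_norm.tendsto _).comp hhs)
  exact le_of_tendsto' htend hbound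
end

section
/- Combining the previous estimates: if x⁺ = (K*K)^ν z with ‖z‖ ≤ E and x_{α(δ)}^δ = R_{α(δ)} y^δ with the modified filter and α(δ) = c(δ/E)^(σr/(2ν+1)), then ‖x_{α(δ)}^δ − x⁺‖ ≤ (c^(−1/(σr)) + c^(2ν/(σr)))·E^(1/(2ν+1))·δ^(2ν/(2ν+1)), i.e. the error is O(δ^(2ν/(2ν+1))) as δ → 0. -/
/-!
Expand everything in the singular system `(μ i, xv i, yv i)`. The error `R_α y^δ - x⁺` has
coefficient `(q/μ) ⟪y^δ - K x⁺, yv i⟫ + (q - 1) μ^{2ν} ⟪z, xv i⟫` on `xv i`, so by Bessel's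
inequality its norm is at most `sup |q/μ| · δ + sup |1 - q| μ^{2ν} · E`. For the modified Tikhonov
filter these suprema are `α^{-1/(σr)}` and `α^{2ν/(σr)}`, and the a priori choice of `α` balances
the two terms at the rate `E^{1/(2ν+1)} δ^{2ν/(2ν+1)}`.
-/

open scoped InnerProductSpace

theorem sq_le_mul_sq_of_abs_le {x y A : ℝ} (h : |x| ≤ A * |y|) : x ^ 2 ≤ A ^ 2 * y ^ 2 := by
  simpa only [mul_pow, sq_abs] using pow_le_pow_left₀ (abs_nonneg x) h 2

namespace Orthonormal

variable {ι X Y : Type*} [NormedAddCommGroup X] [InnerProductSpace ℝ X]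
  [NormedAddCommGroup Y] [InnerProductSpace ℝ Y] {v : ι → X} {w : ι → Y} {c : ι → ℝ}

theorem inner_tsum_smul_left (hv : Orthonormal ℝ v) (hc : Summable fun j => c j • v j) (i : ι) :
    ⟪∑' j, c j • v j, v i⟫_ℝ = c i := by
  classical
  rw [real_inner_comm, ← innerSL_apply_apply ℝ, (innerSL ℝ (v i)).map_tsum hc, tsum_eq_single i]
  · simp [hv.1 i]
  · intro j hj
    simp [hv.2 (Ne.symm hj)]

theorem norm_tsum_smul_sq (hv : Orthonormal ℝ v) (hc : Summable fun j => c j • v j) :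
    ‖∑' j, c j • v j‖ ^ 2 = ∑' j, c j ^ 2 := by
  rw [← real_inner_self_eq_norm_sq, ← innerSL_apply_apply ℝ, (innerSL ℝ _).map_tsum hc]
  congr 1 with j
  rw [innerSL_apply_apply, real_inner_smul_right, hv.inner_tsum_smul_left hc, sq]

theorem summable_smul_of_summable_sq [CompleteSpace X] (hv : Orthonormal ℝ v)
    (hc : Summable fun j => c j ^ 2) : Summable fun j => c j • v j := by
  simpa using (hv.orthogonalFamily.summable_iff_norm_sq_summable c).mpr
    (by simpa only [Real.norm_eq_abs, sq_abs] using hc)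

theorem summable_inner_sq (hw : Orthonormal ℝ w) (y : Y) :
    Summable fun i => ⟪y, w i⟫_ℝ ^ 2 := by
  simpa [Real.norm_eq_abs, sq_abs, real_inner_comm] using hw.inner_products_summable (x := y)

theorem tsum_inner_sq_le (hw : Orthonormal ℝ w) (y : Y) :
    ∑' i, ⟪y, w i⟫_ℝ ^ 2 ≤ ‖y‖ ^ 2 := by
  simpa [Real.norm_eq_abs, sq_abs, real_inner_comm] using hw.tsum_inner_products_le y

section Dominated

variable {y : Y} {A : ℝ}

theorem summable_sq_of_abs_le_inner (hw : Orthonormal ℝ w) (hc : ∀ i, |c i| ≤ A * |⟪y, w i⟫_ℝ|) :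
    Summable fun i => c i ^ 2 :=
  ((hw.summable_inner_sq y).mul_left (A ^ 2)).of_nonneg_of_le (fun _ => sq_nonneg _)
    fun i => sq_le_mul_sq_of_abs_le (hc i)

theorem summable_smul_of_abs_le_inner [CompleteSpace X] (hv : Orthonormal ℝ v)
    (hw : Orthonormal ℝ w) (hc : ∀ i, |c i| ≤ A * |⟪y, w i⟫_ℝ|) :
    Summable fun i => c i • v i :=
  hv.summable_smul_of_summable_sq (hw.summable_sq_of_abs_le_inner hc)

theorem norm_tsum_smul_le_of_abs_le_inner [CompleteSpace X] (hv : Orthonormal ℝ v)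
    (hw : Orthonormal ℝ w) (hA : 0 ≤ A) (hc : ∀ i, |c i| ≤ A * |⟪y, w i⟫_ℝ|) :
    ‖∑' i, c i • v i‖ ≤ A * ‖y‖ := by
  have hsum := hv.summable_smul_of_abs_le_inner hw hc
  refine (pow_le_pow_iff_left₀ (norm_nonneg _) (by positivity) two_ne_zero).mp ?_
  calc ‖∑' i, c i • v i‖ ^ 2 = ∑' i, c i ^ 2 := hv.norm_tsum_smul_sq hsum
    _ ≤ ∑' i, A ^ 2 * ⟪y, w i⟫_ℝ ^ 2 :=
        Summable.tsum_le_tsum (fun i => sq_le_mul_sq_of_abs_le (hc i))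
          (hw.summable_sq_of_abs_le_inner hc)
          ((hw.summable_inner_sq y).mul_left _)
    _ ≤ (A * ‖y‖) ^ 2 := by
        rw [tsum_mul_left, mul_pow]
        exact mul_le_mul_of_nonneg_left (hw.tsum_inner_sq_le y) (sq_nonneg A)

end Dominated

end Orthonormal

theorem Real.rpow_le_rpow_div_of_rpow_le {m a s p : ℝ} (hm : 0 ≤ m) (hs : 0 < s) (hp : 0 ≤ p)
    (h : m ^ s ≤ a) : m ^ p ≤ a ^ (p / s) := by
  calc m ^ p = (m ^ s) ^ (p / s) := by rw [← Real.rpow_mul hm, mul_div_cancel₀ p hs.ne']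
    _ ≤ a ^ (p / s) := Real.rpow_le_rpow (by positivity) h (by positivity)

noncomputable def modifiedTikhonovFilter (σ r α m : ℝ) : ℝ :=
  if α ≤ m ^ (σ * r) then 1 else m ^ σ / (α + m ^ (σ * r)) ^ (1 / r)

section ModifiedTikhonovFilter

variable {σ r α m : ℝ}

theorem modifiedTikhonovFilter_nonneg (hα : 0 ≤ α) (hm : 0 ≤ m) :
    0 ≤ modifiedTikhonovFilter σ r α m := by
  unfold modifiedTikhonovFilter
  split_ifs <;> positivity

theorem modifiedTikhonovFilter_le_one (hσ : 0 < σ) (hr : 0 < r) (hα : 0 ≤ α) (hm : 0 ≤ m) :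
    modifiedTikhonovFilter σ r α m ≤ 1 := by
  unfold modifiedTikhonovFilter
  split_ifs
  · exact le_rfl
  · refine div_le_one_of_le₀ ?_ (by positivity)
    have := Real.rpow_le_rpow_div_of_rpow_le hm (by positivity) hσ.le
      (le_add_of_nonneg_left hα : m ^ (σ * r) ≤ α + m ^ (σ * r))
    rwa [div_mul_cancel_left₀ hσ.ne', ← one_div] at this

theorem abs_modifiedTikhonovFilter_div_le (hσ : 1 ≤ σ) (hr : 0 < r) (hα : 0 < α) (hm : 0 < m) :
    |modifiedTikhonovFilter σ r α m / m| ≤ α ^ (-(1 / (σ * r))) := by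
  have hσr : 0 < σ * r := by positivity
  rw [abs_of_nonneg (div_nonneg (modifiedTikhonovFilter_nonneg hα.le hm.le) hm.le)]
  unfold modifiedTikhonovFilter
  split_ifs with h
  · rw [Real.rpow_neg hα.le, one_div m]
    refine inv_anti₀ (by positivity) ?_
    calc α ^ (1 / (σ * r)) ≤ (m ^ (σ * r)) ^ (1 / (σ * r)) := by gcongr
      _ = m := by rw [← Real.rpow_mul hm.le, mul_one_div_cancel hσr.ne', Real.rpow_one]
  · push Not at h
    calc m ^ σ / (α + m ^ (σ * r)) ^ (1 / r) / m = m ^ (σ - 1) / (α + m ^ (σ * r)) ^ (1 / r) := by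
          rw [Real.rpow_sub_one hm.ne', div_right_comm]
      _ ≤ α ^ ((σ - 1) / (σ * r)) / α ^ (1 / r) := by
          gcongr
          · exact Real.rpow_le_rpow_div_of_rpow_le hm.le hσr (by linarith) h.le
          · linarith [Real.rpow_nonneg hm.le (σ * r)]
      _ = α ^ (-(1 / (σ * r))) := by
          rw [← Real.rpow_sub hα]
          congr 1
          field_simp
          ring

theorem abs_one_sub_modifiedTikhonovFilter_mul_le {ν : ℝ} (hσ : 0 < σ) (hr : 0 < r) (hν : 0 ≤ ν)
    (hα : 0 ≤ α) (hm : 0 ≤ m) :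
    |1 - modifiedTikhonovFilter σ r α m| * m ^ (2 * ν) ≤ α ^ (2 * ν / (σ * r)) := by
  have hq0 := modifiedTikhonovFilter_nonneg (σ := σ) (r := r) hα hm
  have hq1 := modifiedTikhonovFilter_le_one hσ hr hα hm
  rw [abs_of_nonneg (sub_nonneg.mpr hq1)]
  by_cases h : α ≤ m ^ (σ * r)
  · simp only [modifiedTikhonovFilter, if_pos h, sub_self, zero_mul]
    positivity
  · calc (1 - modifiedTikhonovFilter σ r α m) * m ^ (2 * ν) ≤ 1 * m ^ (2 * ν) := by
          gcongr
          linarith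
      _ ≤ α ^ (2 * ν / (σ * r)) := by
          rw [one_mul]
          exact Real.rpow_le_rpow_div_of_rpow_le hm (by positivity) (by positivity) (not_le.mp h).le

end ModifiedTikhonovFilter

theorem rpow_apriori_choice_identity {s ν c δ E : ℝ} (hs : s ≠ 0) (hν : 2 * ν + 1 ≠ 0)
    (hc : 0 < c) (hδ : 0 < δ) (hE : 0 < E) :
    (c * (δ / E) ^ (s / (2 * ν + 1))) ^ (-(1 / s)) * δ
        + (c * (δ / E) ^ (s / (2 * ν + 1))) ^ (2 * ν / s) * E
      = (c ^ (-(1 / s)) + c ^ (2 * ν / s)) * E ^ (1 / (2 * ν + 1)) * δ ^ (2 * ν / (2 * ν + 1)) := by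
  obtain ⟨a, rfl⟩ : ∃ a, Real.exp a = c := ⟨_, Real.exp_log hc⟩
  obtain ⟨b, rfl⟩ : ∃ b, Real.exp b = δ := ⟨_, Real.exp_log hδ⟩
  obtain ⟨e, rfl⟩ : ∃ e, Real.exp e = E := ⟨_, Real.exp_log hE⟩
  simp only [← Real.exp_sub, ← Real.exp_mul, ← Real.exp_add, add_mul]
  congr 2 <;> field_simp <;> ring

/-- `xp` is the source element `(K*K)^ν z` written in the singular system. -/
theorem norm_filtered_reconstruction_sub_le {X Y : Type*}
    [NormedAddCommGroup X] [InnerProductSpace ℝ X] [CompleteSpace X]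
    [NormedAddCommGroup Y] [InnerProductSpace ℝ Y] [CompleteSpace Y]
    (K : X →L[ℝ] Y) {μ : ℕ → ℝ} {xv : ℕ → X} {yv : ℕ → Y}
    (hxv : Orthonormal ℝ xv) (hyv : Orthonormal ℝ yv) (hμ : ∀ i, 0 < μ i)
    (hKy : ∀ i, ContinuousLinearMap.adjoint K (yv i) = μ i • xv i)
    {ν A B E δ : ℝ} (hν : 0 ≤ ν) {g : ℕ → ℝ} (hA : ∀ i, |g i / μ i| ≤ A)
    (hB : ∀ i, |1 - g i| * μ i ^ (2 * ν) ≤ B) {z : X} (hz : ‖z‖ ≤ E) {xp : X}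
    (hxp : xp = ∑' j : ℕ, ((μ j) ^ (2 * ν)) • (⟪z, xv j⟫_ℝ) • xv j)
    {yδ : Y} (hyδ : ‖yδ - K xp‖ ≤ δ) :
    ‖∑' i, (g i / μ i) • ⟪yδ, yv i⟫_ℝ • xv i - xp‖ ≤ A * δ + B * E := by
  set Kadj := ContinuousLinearMap.adjoint K
  have hA0 : 0 ≤ A := (abs_nonneg _).trans (hA 0)
  have hB0 : 0 ≤ B := (mul_nonneg (abs_nonneg _) (Real.rpow_nonneg (hμ 0).le _)).trans (hB 0)
  have hμ_le : ∀ i, μ i ≤ ‖Kadj‖ := fun i => by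
    simpa [hKy i, norm_smul, hxv.1 i, hyv.1 i, abs_of_pos (hμ i)] using Kadj.le_opNorm (yv i)
  set a : ℕ → ℝ := fun j => μ j ^ (2 * ν) * ⟪z, xv j⟫_ℝ
  have ha : ∀ j, |a j| ≤ ‖Kadj‖ ^ (2 * ν) * |⟪z, xv j⟫_ℝ| := fun j => by
    rw [abs_mul, abs_of_nonneg (Real.rpow_nonneg (hμ j).le _)]
    gcongr
    exacts [(hμ j).le, hμ_le j]
  have ha_sum : Summable fun j => a j • xv j := hxv.summable_smul_of_abs_le_inner hxv ha
  replace hxp : xp = ∑' j, a j • xv j := by simp only [hxp, smul_smul, a]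
  have hinner_yδ : ∀ i, ⟪yδ, yv i⟫_ℝ = ⟪yδ - K xp, yv i⟫_ℝ + μ i * a i := fun i => by
    rw [inner_sub_left, ← ContinuousLinearMap.adjoint_inner_right, hKy i, real_inner_smul_right,
      hxp, hxv.inner_tsum_smul_left ha_sum]
    ring
  set u : ℕ → ℝ := fun i => g i / μ i * ⟪yδ - K xp, yv i⟫_ℝ
  set w : ℕ → ℝ := fun i => (g i - 1) * a i
  have hu : ∀ i, |u i| ≤ A * |⟪yδ - K xp, yv i⟫_ℝ| := fun i => by
    rw [abs_mul]; gcongr; exact hA i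
  have hw : ∀ i, |w i| ≤ B * |⟪z, xv i⟫_ℝ| := fun i => by
    rw [abs_mul, abs_mul, abs_sub_comm, abs_of_nonneg (Real.rpow_nonneg (hμ i).le _), ← mul_assoc]
    gcongr
    exact hB i
  have hu_sum := hxv.summable_smul_of_abs_le_inner hyv hu
  have hw_sum := hxv.summable_smul_of_abs_le_inner hxv hw
  have hsplit : ∑' i, (g i / μ i) • ⟪yδ, yv i⟫_ℝ • xv i - xp
      = ∑' i, u i • xv i + ∑' i, w i • xv i := by
    have hterm : ∀ i, (g i / μ i) • ⟪yδ, yv i⟫_ℝ • xv i = (u i • xv i + w i • xv i) + a i • xv i :=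
      fun i => by
        rw [smul_smul, ← add_smul, ← add_smul, hinner_yδ i]
        congr 1
        simp only [u, w]
        field_simp [(hμ i).ne']
        ring
    rw [tsum_congr hterm, (hu_sum.add hw_sum).tsum_add ha_sum, hu_sum.tsum_add hw_sum, hxp,
      add_sub_cancel_right]
  calc _ = ‖∑' i, u i • xv i + ∑' i, w i • xv i‖ := by rw [hsplit]
    _ ≤ ‖∑' i, u i • xv i‖ + ‖∑' i, w i • xv i‖ := norm_add_le _ _
    _ ≤ A * ‖yδ - K xp‖ + B * ‖z‖ := add_le_add
        (hxv.norm_tsum_smul_le_of_abs_le_inner hyv hA0 hu)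
        (hxv.norm_tsum_smul_le_of_abs_le_inner hxv hB0 hw)
    _ ≤ A * δ + B * E := by gcongr

theorem stmt_13_general {X Y : Type*} [NormedAddCommGroup X] [InnerProductSpace ℝ X] [CompleteSpace X]
    [NormedAddCommGroup Y] [InnerProductSpace ℝ Y] [CompleteSpace Y]
    (K : X →L[ℝ] Y)
    (μ : ℕ → ℝ) (xv : ℕ → X) (yv : ℕ → Y)
    (hxv : Orthonormal ℝ xv) (hyv : Orthonormal ℝ yv)
    (hμ : ∀ i, 0 < μ i)
    (hKy : ∀ i, ContinuousLinearMap.adjoint K (yv i) = μ i • xv i)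
    (σ r ν E δ c : ℝ) (hσ : 1 ≤ σ) (hr : 0 < r) (hν : 0 < ν)
    (hE : 0 < E) (hδ : 0 < δ) (hc : 0 < c)
    (q : ℝ → ℝ → ℝ)
    (hq : ∀ α m : ℝ, q α m =
      if α ≤ m ^ (σ * r) then 1 else m ^ σ / (α + m ^ (σ * r)) ^ (1 / r))
    (αδ : ℝ) (hαδ : αδ = c * (δ / E) ^ (σ * r / (2 * ν + 1)))
    (R : ℝ → Y → X)
    (hR : ∀ α : ℝ, ∀ w : Y,
      R α w = ∑' i : ℕ, (q α (μ i) / μ i) • (⟪w, yv i⟫_ℝ) • xv i)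
    (z : X) (hz : ‖z‖ ≤ E) (xp : X)
    (hxp : xp = ∑' j : ℕ, ((μ j) ^ (2 * ν)) • (⟪z, xv j⟫_ℝ) • xv j)
    (yδ : Y) (hyδ : ‖yδ - K xp‖ ≤ δ)
    (xαδ : X) (hx : xαδ = R αδ yδ) :
    ‖xαδ - xp‖ ≤ (c ^ (-(1 / (σ * r))) + c ^ (2 * ν / (σ * r))) *
      E ^ (1 / (2 * ν + 1)) * δ ^ (2 * ν / (2 * ν + 1)) := by
  obtain rfl : q = modifiedTikhonovFilter σ r := funext₂ hq
  have hσ0 : 0 < σ := by linarith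
  have hα : 0 < αδ := by rw [hαδ]; positivity
  rw [hx, hR]
  calc _ ≤ αδ ^ (-(1 / (σ * r))) * δ + αδ ^ (2 * ν / (σ * r)) * E :=
        norm_filtered_reconstruction_sub_le K hxv hyv hμ hKy hν.le
          (fun i => abs_modifiedTikhonovFilter_div_le hσ hr hα (hμ i))
          (fun i => abs_one_sub_modifiedTikhonovFilter_mul_le hσ0 hr hν.le hα.le (hμ i).le)
          hz hxp hyδ
    _ = _ := by
        rw [hαδ]
        exact rpow_apriori_choice_identity (by positivity) (by positivity) hc hδ hE

theorem stmt_13 {X Y : Type*} [NormedAddCommGroup X] [InnerProductSpace ℝ X] [CompleteSpace X]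
    [NormedAddCommGroup Y] [InnerProductSpace ℝ Y] [CompleteSpace Y]
    (K : X →L[ℝ] Y) (hK : IsCompactOperator K)
    (μ : ℕ → ℝ) (xv : ℕ → X) (yv : ℕ → Y)
    (hxv : Orthonormal ℝ xv) (hyv : Orthonormal ℝ yv)
    (hμ : ∀ i, 0 < μ i)
    (hKx : ∀ i, K (xv i) = μ i • yv i)
    (hKy : ∀ i, ContinuousLinearMap.adjoint K (yv i) = μ i • xv i)
    (σ r ν E δ c : ℝ) (hσ : 1 ≤ σ) (hr : 0 < r) (hν : 0 < ν)
    (hE : 0 < E) (hδ : 0 < δ) (hc : 0 < c)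
    (q : ℝ → ℝ → ℝ)
    (hq : ∀ α m : ℝ, q α m =
      if α ≤ m ^ (σ * r) then 1 else m ^ σ / (α + m ^ (σ * r)) ^ (1 / r))
    (αδ : ℝ) (hαδ : αδ = c * (δ / E) ^ (σ * r / (2 * ν + 1)))
    (R : ℝ → Y → X)
    (hR : ∀ α : ℝ, ∀ w : Y,
      R α w = ∑' i : ℕ, (q α (μ i) / μ i) • (⟪w, yv i⟫_ℝ) • xv i)
    (z : X) (hz : ‖z‖ ≤ E) (xp : X)
    (hxp : xp = ∑' j : ℕ, ((μ j) ^ (2 * ν)) • (⟪z, xv j⟫_ℝ) • xv j)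
    (yδ : Y) (hyδ : ‖yδ - K xp‖ ≤ δ)
    (xαδ : X) (hx : xαδ = R αδ yδ) :
    ‖xαδ - xp‖ ≤ (c ^ (-(1 / (σ * r))) + c ^ (2 * ν / (σ * r))) *
      E ^ (1 / (2 * ν + 1)) * δ ^ (2 * ν / (2 * ν + 1)) :=
  stmt_13_general K μ xv yv hxv hyv hμ hKy σ r ν E δ c hσ hr hν hE hδ hc q hq αδ hαδ R hR z hz xp
    hxp yδ hyδ xαδ hx
end
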